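/- For every finite sequence x_0, ..., x_{q−1} of positive rational numbers, every sequence of natural numbers m_0, ..., m_{q−1} with each m_j > 1, and all positive rational numbers u, v with u < v, there exists a rational number y with u < y < v such that for every j < q, the rational number y·x_j is not an m_j-th power. -/

import Mathlib

/-!
A prime `p` exceeding all numerators and denominators of the `x j` has `v_p (x j) = 0`.
Rationals of any prescribed `p`-adic valuation are dense, so some `y ∈ (u, v)` has `v_p y = 1`.
Then `v_p (y * x j) = 1`, which is not divisible by `m j`, while `v_p (w ^ m j) = m j * v_p w`.
-/

theorem padicValRat_eq_zero_of_lt {p : ℕ} {x : ℚ} (hnum : x.num.natAbs < p) (hden : x.den < p) :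
    padicValRat p x = 0 := by
  obtain rfl | hx := eq_or_ne x 0
  · exact padicValRat.zero
  have hnum' : ¬ (p : ℤ) ∣ x.num := fun h =>
    Nat.not_dvd_of_pos_of_lt (Int.natAbs_pos.2 (Rat.num_ne_zero.2 hx)) hnum (Int.natCast_dvd.1 h)
  rw [padicValRat_def, padicValInt.eq_zero_of_not_dvd hnum',
    padicValNat.eq_zero_of_not_dvd (Nat.not_dvd_of_pos_of_lt x.pos hden), sub_self]

theorem exists_prime_forall_padicValRat_eq_zero {ι : Type*} [Fintype ι] (x : ι → ℚ) :
    ∃ p, p.Prime ∧ ∀ i, padicValRat p (x i) = 0 := by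
  obtain ⟨p, hbound, hp⟩ :=
    Nat.exists_infinite_primes ((Finset.univ.sup fun i => max (x i).num.natAbs (x i).den) + 1)
  refine ⟨p, hp, fun i => padicValRat_eq_zero_of_lt ?_ ?_⟩ <;>
  · have := Finset.le_sup (f := fun i => max (x i).num.natAbs (x i).den) (Finset.mem_univ i)
    simp only [max_le_iff] at this
    omega

theorem exists_int_between_not_dvd {K : Type*} [Field K] [LinearOrder K] [IsStrictOrderedRing K]
    [FloorRing K] {p : ℕ} (hp : p ≠ 1) {s t : K} (hst : s + 2 < t) :
    ∃ c : ℤ, s < c ∧ (c : K) < t ∧ ¬ (p : ℤ) ∣ c := by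
  set a := ⌊s⌋ + 1
  have has : s < a := by push_cast [a]; exact Int.lt_floor_add_one s
  have hat : (a : K) + 1 < t := by
    have := Int.floor_le s
    push_cast [a]
    linarith
  by_cases ha : (p : ℤ) ∣ a
  · refine ⟨a + 1, by push_cast; linarith, by push_cast; linarith, fun ha' => hp ?_⟩
    exact Int.natCast_dvd_natCast.1 ((dvd_add_right ha).1 ha') |> Nat.dvd_one.1
  · exact ⟨a, has, by linarith, ha⟩

theorem exists_padicValRat_eq_zero_between (p : ℕ) [Fact p.Prime] {u v : ℚ} (huv : u < v) :
    ∃ z, u < z ∧ z < v ∧ z ≠ 0 ∧ padicValRat p z = 0 := by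
  have hp : p.Prime := Fact.out
  obtain ⟨K, hK⟩ := exists_nat_gt (2 / (v - u))
  -- `N ≡ 1 [MOD p]` is prime to `p` and stretches `(u, v)` to length `> 2`
  set N := p * K + 1
  have hpN : ¬ p ∣ N := fun h =>
    hp.one_lt.ne' (Nat.dvd_one.1 ((Nat.dvd_add_right (dvd_mul_right p K)).1 h))
  have hN : (0 : ℚ) < N := by positivity
  have hlen : N * u + 2 < N * v := by
    have hKN : (K : ℚ) ≤ N := by
      exact_mod_cast (Nat.le_mul_of_pos_left K hp.pos).trans (Nat.le_succ _)
    have := (div_lt_iff₀ (sub_pos.2 huv)).1 hK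
    nlinarith
  obtain ⟨c, huc, hcv, hpc⟩ := exists_int_between_not_dvd hp.one_lt.ne' hlen
  have hc : (c : ℚ) ≠ 0 := Int.cast_ne_zero.2 (by rintro rfl; exact hpc (dvd_zero _))
  refine ⟨c / N, (lt_div_iff₀' hN).2 huc, (div_lt_iff₀' hN).2 hcv, div_ne_zero hc hN.ne', ?_⟩
  rw [padicValRat.div hc hN.ne', padicValRat.of_int, padicValRat.of_nat,
    padicValInt.eq_zero_of_not_dvd hpc, padicValNat.eq_zero_of_not_dvd hpN, sub_self]

theorem exists_padicValRat_eq_between (p : ℕ) [Fact p.Prime] (k : ℤ) {u v : ℚ} (huv : u < v) :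
    ∃ y, u < y ∧ y < v ∧ padicValRat p y = k := by
  have hp : p.Prime := Fact.out
  have hpk : (0 : ℚ) < (p : ℚ) ^ k := zpow_pos (by exact_mod_cast hp.pos) k
  obtain ⟨z, huz, hzv, hz, hvz⟩ :=
    exists_padicValRat_eq_zero_between p (div_lt_div_of_pos_right huv hpk)
  refine ⟨p ^ k * z, (div_lt_iff₀' hpk).1 huz, (lt_div_iff₀' hpk).1 hzv, ?_⟩
  rw [padicValRat.mul hpk.ne' hz, padicValRat.zpow, padicValRat.self hp.one_lt, hvz]
  ring

theorem not_exists_pow_eq_of_not_dvd_padicValRat (p : ℕ) [Fact p.Prime] {m : ℕ} {a : ℚ}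
    (h : ¬ (m : ℤ) ∣ padicValRat p a) : ¬ ∃ w : ℚ, a = w ^ m := by
  rintro ⟨w, rfl⟩
  rw [padicValRat.pow] at h
  exact h (dvd_mul_right _ _)

theorem exists_between_not_pow_general (q : ℕ) (x : Fin q → ℚ) (hx : ∀ j, 0 < x j)
    (m : Fin q → ℕ) (hm : ∀ j, 1 < m j) (u v : ℚ)
    (huv : u < v) :
    ∃ y : ℚ, u < y ∧ y < v ∧ ∀ j, ¬ ∃ w : ℚ, y * x j = w ^ m j := by
  obtain ⟨p, hp, hpx⟩ := exists_prime_forall_padicValRat_eq_zero x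
  have := Fact.mk hp
  obtain ⟨y, huy, hyv, hpy⟩ := exists_padicValRat_eq_between p 1 huv
  have hy : y ≠ 0 := by rintro rfl; simp at hpy
  refine ⟨y, huy, hyv, fun j => not_exists_pow_eq_of_not_dvd_padicValRat p ?_⟩
  rw [padicValRat.mul hy (hx j).ne', hpy, hpx j, add_zero]
  exact fun h => (hm j).ne' (Nat.dvd_one.1 (by exact_mod_cast h))

/-- Between any two positive rationals there is a rational `y` such that none of
the `y * x j` is an `m j`-th power. -/
theorem exists_between_not_pow (q : ℕ) (x : Fin q → ℚ) (hx : ∀ j, 0 < x j)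
    (m : Fin q → ℕ) (hm : ∀ j, 1 < m j) (u v : ℚ) (hu : 0 < u) (hv : 0 < v)
    (huv : u < v) :
    ∃ y : ℚ, u < y ∧ y < v ∧ ∀ j, ¬ ∃ w : ℚ, y * x j = w ^ m j :=
  exists_between_not_pow_general q x hx m hm u v huv
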